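/- Let n ≥ 1 and suppose X_1, …, X_h ∈ R satisfy f^{(n)}(X_i) = 0 for all i. Then μ_n(f(X_1), X_2, …, X_h) = g(μ_n(X_1, X_2, …, X_h)). -/

import Mathlib

open Finset

noncomputable section

/-- The Moore determinant `μ(X₁, …, X_h) = det (Xᵢ^{q^{j-1}})`. -/
def moore (q : ℕ) {h : ℕ} {R : Type*} [CommRing R] (X : Fin h → R) : R :=
  Matrix.det (Matrix.of fun i j : Fin h => X i ^ q ^ (j : ℕ))

/-- `f(X) = πX + u₁X^q + ⋯ + u_{h−1}X^{q^{h−1}} + X^{q^h}`. -/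
def fmap (q h : ℕ) {R : Type*} [CommRing R] (π : R) (u : ℕ → R) (X : R) : R :=
  π * X + (∑ k ∈ Finset.Ico 1 h, u k * X ^ q ^ k) + X ^ q ^ h

/-- `μ_n(X₁, …, X_h) = Σ μ(f^(a₁)(X₁), …, f^(a_h)(X_h))`, the sum over all tuples
`(a₁, …, a_h)` with `0 ≤ aᵢ ≤ n−1` and `a₁ + ⋯ + a_h = (h−1)(n−1)`. -/
def mooreN (q h n : ℕ) {R : Type*} [CommRing R] (π : R) (u : ℕ → R) (X : Fin h → R) : R :=
  ∑ a ∈ Finset.univ.filter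
      (fun a : Fin h → Fin n => ∑ i, (a i : ℕ) = (h - 1) * (n - 1)),
    moore q (fun i => (fmap q h π u)^[(a i : ℕ)] (X i))

/-- `g(T) = πT + (−1)^{h−1}T^q`. -/
def gmap (q h : ℕ) {R : Type*} [CommRing R] (π : R) (T : R) : R :=
  π * T + (-1) ^ (h - 1) * T ^ q

/-!
Expand every Moore determinant along its first column, writing `C_i(Y)` for the cofactor of
`Y_i` (it does not involve `Y_i`). Then `μ(Y) = Σ_i C_i(Y) Y_i`, while
`Σ_i C_i(Y) f(Y_i) = g(μ(Y))`: the columns `Y^{q^k}` with `0 < k < h` are alien to the first one,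
and the column `Y^{q^h}` gives `(-1)^{h-1} μ(Y)^q` because `x ↦ x^q` is a ring endomorphism.

With `T_i(b) = C_i(f^b X) f^{b_i}(X_i)` for `b ∈ ℕ^h`, the left-hand side is
`Σ_a Σ_i T_i(a + e_1)` and the right-hand side is `Σ_a Σ_i T_i(a + e_i)`, with `a` running over the
index set of `μ_n`. As `T_i(b) = 0` once some `b_j ≥ n`, both `Σ_a T_i(a + e_1)` and
`Σ_a T_i(a + e_i)` are the sum of `T_i(c)` over the `c ∈ [0, n)^h` with `|c| = (h-1)(n-1) + 1`;
every such `c` has all its entries positive, so it is `a + e_k` for every `k`.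
-/

section MooreDeterminant

variable {R : Type*} [CommRing R]

def mooreMatrix (q : ℕ) {h : ℕ} (Y : Fin h → R) : Matrix (Fin h) (Fin h) R :=
  Matrix.of fun i j => Y i ^ q ^ (j : ℕ)

theorem moore_eq_det_mooreMatrix (q : ℕ) {h : ℕ} (Y : Fin h → R) :
    moore q Y = (mooreMatrix q Y).det :=
  rfl

section Cofactor

variable (q : ℕ) {h : ℕ} [NeZero h]

/-- `adjugate A 0 i` is the cofactor of the entry `(i, 0)`; it does not involve row `i`. -/
def mooreCofactor (Y : Fin h → R) (i : Fin h) : R :=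
  (mooreMatrix q Y).adjugate 0 i

theorem sum_mooreCofactor_mul (Y v : Fin h → R) :
    ∑ i, mooreCofactor q Y i * v i = ((mooreMatrix q Y).updateCol 0 v).det := by
  rw [← Matrix.cramer_apply, Matrix.cramer_eq_adjugate_mulVec]
  rfl

theorem sum_mooreCofactor_mul_pow (Y : Fin h → R) (k : Fin h) :
    ∑ i, mooreCofactor q Y i * Y i ^ q ^ (k : ℕ) = if k = 0 then moore q Y else 0 := by
  have := congr_fun (congr_fun (Matrix.adjugate_mul (mooreMatrix q Y)) 0) k
  simpa [Matrix.mul_apply, Matrix.one_apply, eq_comm, mooreCofactor, moore_eq_det_mooreMatrix,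
    mooreMatrix] using this

theorem mooreCofactor_congr {Y Y' : Fin h → R} {i : Fin h} (hY : ∀ j ≠ i, Y j = Y' j) :
    mooreCofactor q Y i = mooreCofactor q Y' i := by
  simp only [mooreCofactor, Matrix.adjugate_apply]
  congr 1
  ext r c
  rcases eq_or_ne r i with rfl | hr
  · simp
  · simp [hr, hY r hr, mooreMatrix]

theorem mooreCofactor_eq_zero (hq : q ≠ 0) {Y : Fin h → R} {i j : Fin h} (hji : j ≠ i)
    (hY : Y j = 0) : mooreCofactor q Y i = 0 := by
  rw [mooreCofactor, Matrix.adjugate_apply]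
  refine Matrix.det_eq_zero_of_row_eq_zero j fun c => ?_
  simp [hji, hY, mooreMatrix, hq]

theorem det_updateCol_zero_pow_eq (Y : Fin h → R) :
    ((mooreMatrix q Y).updateCol 0 fun i => Y i ^ q ^ h).det
      = (-1) ^ (h - 1) * moore q fun i => Y i ^ q := by
  obtain ⟨d, rfl⟩ := Nat.exists_eq_add_one_of_ne_zero (NeZero.ne h)
  have hrot : mooreMatrix q (fun i => Y i ^ q)
      = ((mooreMatrix q Y).updateCol 0 fun i => Y i ^ q ^ (d + 1)).submatrix id (finRotate _) := by
    ext i j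
    induction j using Fin.lastCases with
    | last => simp [mooreMatrix, ← pow_mul, ← pow_succ']
    | cast k => simp [mooreMatrix, Fin.coeSucc_eq_succ, ← pow_mul, ← pow_succ']
  rw [moore_eq_det_mooreMatrix, hrot, Matrix.det_permute', sign_finRotate]
  simp [← mul_assoc, ← pow_add, ← two_mul, pow_mul]

end Cofactor

section Frobenius

variable (K : Type*) [Field K] [Fintype K] [Algebra K R] {h : ℕ}

theorem moore_pow_card (Y : Fin h → R) :
    moore (Fintype.card K) Y ^ Fintype.card K
      = moore (Fintype.card K) fun i => Y i ^ Fintype.card K := by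
  rw [moore_eq_det_mooreMatrix, ← FiniteField.frobeniusAlgHom_apply K, AlgHom.map_det]
  congr 1
  ext i j
  simp [mooreMatrix, ← pow_mul, mul_comm]

theorem gmap_sum {ι : Type*} (π : R) (s : Finset ι) (T : ι → R) :
    gmap (Fintype.card K) h π (∑ a ∈ s, T a) = ∑ a ∈ s, gmap (Fintype.card K) h π (T a) := by
  have hpow : (∑ a ∈ s, T a) ^ Fintype.card K = ∑ a ∈ s, T a ^ Fintype.card K :=
    map_sum (FiniteField.frobeniusAlgHom K R) T s
  simp only [gmap, hpow, mul_sum, sum_add_distrib]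

theorem sum_mooreCofactor_mul_fmap [NeZero h] (π : R) (u : ℕ → R) (Y : Fin h → R) :
    ∑ i, mooreCofactor (Fintype.card K) Y i * fmap (Fintype.card K) h π u (Y i)
      = gmap (Fintype.card K) h π (moore (Fintype.card K) Y) := by
  set q := Fintype.card K
  have hlow : ∀ k ∈ Ico 1 h, ∑ i, mooreCofactor q Y i * (u k * Y i ^ q ^ k) = 0 := by
    intro k hk
    obtain ⟨hk1, hkh⟩ := mem_Ico.1 hk
    have hk0 : (⟨k, hkh⟩ : Fin h) ≠ 0 := Fin.ne_of_val_ne (by simp; omega)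
    simp_rw [mul_left_comm _ (u k), ← mul_sum]
    rw [sum_mooreCofactor_mul_pow q Y ⟨k, hkh⟩, if_neg hk0, mul_zero]
  have hself : ∑ i, mooreCofactor q Y i * Y i = moore q Y := by
    simpa using sum_mooreCofactor_mul_pow q Y 0
  have htop : ∑ i, mooreCofactor q Y i * Y i ^ q ^ h = (-1) ^ (h - 1) * moore q Y ^ q := by
    rw [sum_mooreCofactor_mul, det_updateCol_zero_pow_eq, moore_pow_card]
  simp only [fmap, mul_add, sum_add_distrib, mul_sum]
  rw [sum_comm, sum_eq_zero hlow, htop, add_zero, gmap, ← hself, mul_sum]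
  simp_rw [mul_left_comm π]

end Frobenius

section Tuples

open Finset.Nat

def antidiagonalTupleBelow (h s n : ℕ) : Finset (Fin h → ℕ) :=
  {a ∈ antidiagonalTuple h s | ∀ i, a i < n}

variable {h s n : ℕ}

theorem mem_antidiagonalTupleBelow {a : Fin h → ℕ} :
    a ∈ antidiagonalTupleBelow h s n ↔ ∑ i, a i = s ∧ ∀ i, a i < n := by
  rw [antidiagonalTupleBelow, mem_filter, mem_antidiagonalTuple]

theorem sum_fin_eq_sum_antidiagonalTupleBelow {M : Type*} [AddCommMonoid M]
    (F : (Fin h → ℕ) → M) :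
    ∑ a ∈ univ.filter (fun a : Fin h → Fin n => ∑ i, (a i : ℕ) = s), F (fun i => a i)
      = ∑ b ∈ antidiagonalTupleBelow h s n, F b := by
  refine sum_bij' (fun a _ i => a i) (fun b hb i => ⟨b i, (mem_antidiagonalTupleBelow.1 hb).2 i⟩)
    (fun a ha => ?_) (fun b hb => mem_filter.2 ⟨mem_univ _, (mem_antidiagonalTupleBelow.1 hb).1⟩)
    (fun _ _ => rfl) (fun _ _ => rfl) fun _ _ => rfl
  exact mem_antidiagonalTupleBelow.2 ⟨(mem_filter.1 ha).2, fun i => (a i).isLt⟩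

theorem sum_add_single_one (a : Fin h → ℕ) (k : Fin h) :
    ∑ i, (a + Pi.single k 1 : Fin h → ℕ) i = ∑ i, a i + 1 := by
  simp [sum_add_distrib]

theorem one_le_of_mem_antidiagonalTupleBelow {c : Fin h → ℕ}
    (hc : c ∈ antidiagonalTupleBelow h ((h - 1) * (n - 1) + 1) n) (k : Fin h) : 1 ≤ c k := by
  obtain ⟨hsum, hlt⟩ := mem_antidiagonalTupleBelow.1 hc
  have hrest : ∑ i ∈ univ.erase k, c i ≤ (h - 1) * (n - 1) := by
    simpa [card_erase_of_mem] using
      sum_le_card_nsmul (univ.erase k) c (n - 1) fun i _ => Nat.le_sub_one_of_lt (hlt i)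
  rw [← add_sum_erase _ _ (mem_univ k)] at hsum
  omega

theorem sum_antidiagonalTupleBelow_add_single {M : Type*} [AddCommMonoid M]
    (G : (Fin h → ℕ) → M) (hG : ∀ b j, n ≤ b j → G b = 0) (k : Fin h) :
    ∑ a ∈ antidiagonalTupleBelow h ((h - 1) * (n - 1)) n, G (a + Pi.single k 1)
      = ∑ c ∈ antidiagonalTupleBelow h ((h - 1) * (n - 1) + 1) n, G c := by
  refine sum_bij_ne_zero (fun a _ _ => a + Pi.single k 1) ?_ ?_ ?_ fun _ _ _ => rfl
  · intro a ha hG0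
    refine mem_antidiagonalTupleBelow.2 ⟨?_, fun j => ?_⟩
    · rw [sum_add_single_one, (mem_antidiagonalTupleBelow.1 ha).1]
    · by_contra hj
      exact hG0 (hG _ j (not_lt.1 hj))
  · intro a _ _ b _ _ hab
    exact add_right_cancel hab
  · intro c hc _
    obtain ⟨hsum, hlt⟩ := mem_antidiagonalTupleBelow.1 hc
    have hle : Pi.single k 1 ≤ c := fun j => by
      rcases eq_or_ne j k with rfl | hj
      · simpa using one_le_of_mem_antidiagonalTupleBelow hc j
      · simp [hj]
    have hcancel := tsub_add_cancel_of_le hle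
    refine ⟨c - Pi.single k 1, mem_antidiagonalTupleBelow.2 ⟨?_, fun j => ?_⟩, ?_, hcancel⟩
    · rw [← hcancel, sum_add_single_one] at hsum
      omega
    · exact (tsub_le_self (a := c j)).trans_lt (hlt j)
    · rwa [hcancel]

end Tuples

section Iterate

variable (q : ℕ) {h : ℕ} [NeZero h] (f : R → R) (X : Fin h → R)

def iterateCofactorTerm (i : Fin h) (b : Fin h → ℕ) : R :=
  mooreCofactor q (fun j => f^[b j] (X j)) i * f^[b i] (X i)

theorem moore_iterate_eq_sum_iterateCofactorTerm (b : Fin h → ℕ) :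
    moore q (fun j => f^[b j] (X j)) = ∑ i, iterateCofactorTerm q f X i b := by
  simpa [iterateCofactorTerm] using (sum_mooreCofactor_mul_pow q (fun j => f^[b j] (X j)) 0).symm

theorem sum_iterateCofactorTerm_add_single (b : Fin h → ℕ) :
    ∑ i, iterateCofactorTerm q f X i (b + Pi.single i 1)
      = ∑ i, mooreCofactor q (fun j => f^[b j] (X j)) i * f (f^[b i] (X i)) := by
  refine sum_congr rfl fun i _ => ?_
  rw [iterateCofactorTerm, mooreCofactor_congr q (Y' := fun j => f^[b j] (X j)) fun j hj => by
    simp [hj]]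
  simp [Function.iterate_succ_apply']

theorem iterateCofactorTerm_eq_zero (hq : q ≠ 0) (hf : f 0 = 0) {n : ℕ}
    (hX : ∀ j, f^[n] (X j) = 0) {b : Fin h → ℕ} {j : Fin h} (hj : n ≤ b j) (i : Fin h) :
    iterateCofactorTerm q f X i b = 0 := by
  have hzero : f^[b j] (X j) = 0 := by
    rw [← Nat.sub_add_cancel hj, Function.iterate_add_apply, hX, Function.iterate_fixed hf]
  rcases eq_or_ne j i with rfl | hji
  · rw [iterateCofactorTerm, hzero, mul_zero]
  · rw [iterateCofactorTerm, mooreCofactor_eq_zero q hq hji hzero, zero_mul]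

end Iterate

theorem iterate_update_self_apply {α ι : Type*} [DecidableEq ι] (f : α → α) (X : ι → α) (k : ι)
    (a : ι → ℕ) (j : ι) :
    f^[a j] (Function.update X k (f (X k)) j) = f^[(a + Pi.single k 1 : ι → ℕ) j] (X j) := by
  rcases eq_or_ne j k with rfl | hj
  · simp [Function.iterate_succ_apply]
  · simp [hj]

theorem sum_moore_iterate_add_single (q : ℕ) (hq : q ≠ 0) {h n : ℕ} [NeZero h] (f : R → R)
    (hf : f 0 = 0) (X : Fin h → R) (hX : ∀ j, f^[n] (X j) = 0) (k : Fin h) :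
    ∑ a ∈ antidiagonalTupleBelow h ((h - 1) * (n - 1)) n,
        moore q (fun j => f^[(a + Pi.single k 1 : Fin h → ℕ) j] (X j))
      = ∑ a ∈ antidiagonalTupleBelow h ((h - 1) * (n - 1)) n,
          ∑ i, mooreCofactor q (fun j => f^[a j] (X j)) i * f (f^[a i] (X i)) := by
  have hshift (i l : Fin h) := sum_antidiagonalTupleBelow_add_single
    (iterateCofactorTerm q f X i) (fun _ _ hj => iterateCofactorTerm_eq_zero q f X hq hf hX hj i) l
  simp_rw [moore_iterate_eq_sum_iterateCofactorTerm, ← sum_iterateCofactorTerm_add_single]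
  rw [sum_comm, sum_comm (s := antidiagonalTupleBelow _ _ _)]
  exact sum_congr rfl fun i _ => (hshift i k).trans (hshift i i).symm

theorem mooreN_eq_sum_antidiagonalTupleBelow (q h n : ℕ) (π : R) (u : ℕ → R) (X : Fin h → R) :
    mooreN q h n π u X = ∑ a ∈ antidiagonalTupleBelow h ((h - 1) * (n - 1)) n,
      moore q (fun i => (fmap q h π u)^[a i] (X i)) :=
  sum_fin_eq_sum_antidiagonalTupleBelow fun b => moore q fun i => (fmap q h π u)^[b i] (X i)

end MooreDeterminant

theorem mooreN_fmap_first_eq_gmap_mooreN_general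
    (q h n : ℕ) (hh : 1 ≤ h)
    (K : Type*) [Field K] [Fintype K] (hK : Fintype.card K = q)
    (R : Type*) [CommRing R] [Algebra K R]
    (π : R) (u : ℕ → R) (X : Fin h → R)
    (hX : ∀ i, (fmap q h π u)^[n] (X i) = 0) :
    mooreN q h n π u (Function.update X ⟨0, hh⟩ (fmap q h π u (X ⟨0, hh⟩)))
      = gmap q h π (mooreN q h n π u X) := by
  subst hK
  have : NeZero h := ⟨by omega⟩
  have hq : Fintype.card K ≠ 0 := Fintype.card_ne_zero
  have hf : fmap (Fintype.card K) h π u 0 = 0 := by simp [fmap, hq]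
  simp_rw [mooreN_eq_sum_antidiagonalTupleBelow, iterate_update_self_apply,
    sum_moore_iterate_add_single _ hq _ hf X hX, gmap_sum, sum_mooreCofactor_mul_fmap]

/-- Let `n ≥ 1` and suppose `f^(n)(Xᵢ) = 0` for all `i`. Then
`μ_n(f(X₁), X₂, …, X_h) = g(μ_n(X₁, X₂, …, X_h))`. -/
theorem mooreN_fmap_first_eq_gmap_mooreN
    (p e q h n : ℕ) (hp : p.Prime) (he : 1 ≤ e) (hq : q = p ^ e) (hh : 1 ≤ h) (hn : 1 ≤ n)
    (K : Type*) [Field K] [Fintype K] [DecidableEq K] (hK : Fintype.card K = q)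
    (R : Type*) [CommRing R] [Algebra K R]
    (π : R) (u : ℕ → R) (X : Fin h → R)
    (hX : ∀ i, (fmap q h π u)^[n] (X i) = 0) :
    mooreN q h n π u (Function.update X ⟨0, hh⟩ (fmap q h π u (X ⟨0, hh⟩)))
      = gmap q h π (mooreN q h n π u X) :=
  mooreN_fmap_first_eq_gmap_mooreN_general q h n hh K hK R π u X hX
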